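/- The sequence csd(Q_{2^n}), where Q_{2^n} is the generalized quaternion group of order 2^n (n ≥ 3), converges to 0 as n → ∞. -/

import Mathlib

open Pointwise

/-- The cyclic subgroup commutativity degree of a group `G`: the proportion of
pairs of cyclic subgroups `(H, K)` of `G` with `HK = KH`. -/
noncomputable def csd (G : Type*) [Group G] : ℚ :=
  (Nat.card {pr : Subgroup G × Subgroup G //
      IsCyclic ↥pr.1 ∧ IsCyclic ↥pr.2 ∧
      (pr.1 : Set G) * (pr.2 : Set G) = (pr.2 : Set G) * (pr.1 : Set G)} : ℚ) /
  (Nat.card {H : Subgroup G // IsCyclic ↥H} : ℚ) ^ 2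

/-!
In `QuaternionGroup n` (of order `4n`) let `A = ⟨a 1⟩`, cyclic of order `2n`. A subgroup of
a cyclic group is determined by its order, so `A` has at most `d(2n)` subgroups. Every cyclic
subgroup not contained in `A` is some `⟨xa i⟩` of order four, and there are at least `n` of
them. If `⟨xa i⟩` and `⟨xa j⟩` permute, then `xa j * xa i = a (n + i - j)` lies in
`⟨xa i⟩⟨xa j⟩`, which forces `4 (i - j) = 0`; so each has at most four permuting partners
outside `A`. Counting pairs, `csd ≤ (2 d(2n) + 4) / n`, which is `(2k + 8) / 2^k` for
`n = 2^k`.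
-/

open Filter Topology Finset Subgroup

theorem IsCyclic.subgroup_eq_of_card_eq {α : Type*} [Group α] [Finite α] [IsCyclic α]
    {H K : Subgroup α} (h : Nat.card H = Nat.card K) : H = K := by
  classical
  have : Fintype α := Fintype.ofFinite α
  suffices key : ∀ L : Subgroup α, (L : Set α) = {x | x ^ Nat.card L = 1} from
    SetLike.coe_injective (by rw [key H, key K, h])
  intro L
  refine Set.eq_of_subset_of_ncard_le (fun x hx => ?_) ?_ (Set.toFinite _)
  · exact congrArg Subtype.val (pow_card_eq_one' (x := (⟨x, hx⟩ : L)))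
  · rw [Set.ncard_eq_toFinset_card', Set.toFinset_ofPred, ← Nat.card_coe_set_eq]
    exact IsCyclic.card_pow_eq_one_le Nat.card_pos

theorem IsCyclic.card_subgroup_le_card_divisors {α : Type*} [Group α] [Finite α] [IsCyclic α] :
    Nat.card (Subgroup α) ≤ #(Nat.card α).divisors := by
  let f : Subgroup α → (Nat.card α).divisors := fun K =>
    ⟨Nat.card K, Nat.mem_divisors.2 ⟨K.card_subgroup_dvd_card, Nat.card_pos.ne'⟩⟩
  have hf : Function.Injective f := fun H K h =>
    IsCyclic.subgroup_eq_of_card_eq (congrArg Subtype.val h)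
  simpa only [Nat.card_eq_fintype_card, Fintype.card_coe] using Nat.card_le_card_of_injective f hf

theorem Subgroup.card_le_zpowers_le_card_divisors {G : Type*} [Group G] [Finite G] (g : G) :
    Nat.card {K : Subgroup G // K ≤ zpowers g} ≤ #(orderOf g).divisors := by
  rw [← Nat.card_congr (MapSubtype.orderIso (zpowers g)).toEquiv, ← Nat.card_zpowers]
  exact IsCyclic.card_subgroup_le_card_divisors

theorem card_permuting_cyclic_pairs_le {G : Type*} [Group G] [Finite G] (A : Subgroup G) (d : ℕ)
    (hd : ∀ H : Subgroup G, IsCyclic H → ¬ H ≤ A →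
      Nat.card {K : Subgroup G // IsCyclic K ∧ ¬ K ≤ A ∧ (H : Set G) * K = K * H} ≤ d) :
    Nat.card {p : Subgroup G × Subgroup G //
        IsCyclic p.1 ∧ IsCyclic p.2 ∧ (p.1 : Set G) * p.2 = p.2 * p.1} ≤
      Nat.card {H : Subgroup G // IsCyclic H} * (2 * Nat.card {K : Subgroup G // K ≤ A} + d) := by
  classical
  have := Fintype.ofFinite (Subgroup G)
  simp only [Nat.card_eq_fintype_card, Fintype.card_subtype] at hd ⊢
  set C : Finset (Subgroup G) := {H | IsCyclic H}
  set L : Finset (Subgroup G) := {K | K ≤ A}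
  set P : Finset (Subgroup G × Subgroup G) :=
    {p | IsCyclic p.1 ∧ IsCyclic p.2 ∧ (p.1 : Set G) * p.2 = p.2 * p.1}
  set P' := P.filter fun p => ¬ p.1 ≤ A ∧ ¬ p.2 ≤ A
  have hcover : P ⊆ C ×ˢ L ∪ L ×ˢ C ∪ P' := by
    intro p hp
    simp only [P, P', C, L, mem_union, mem_product, mem_filter, mem_univ, true_and] at hp ⊢
    tauto
  have hP' : #P' ≤ d * #(C.filter fun H => ¬ H ≤ A) := by
    refine card_le_mul_card_image_of_maps_to (f := Prod.fst) (fun p hp => ?_) d fun H hH => ?_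
    · simp only [P', P, C, mem_filter, mem_univ, true_and] at hp ⊢
      exact ⟨hp.1.1, hp.2.1⟩
    · simp only [C, mem_filter, mem_univ, true_and] at hH
      refine le_trans (card_le_card_of_injOn Prod.snd (fun p hp => ?_) fun p hp q hq h => ?_)
        (hd H hH.1 hH.2)
      · simp only [P', P, mem_filter, mem_univ, true_and, coe_filter, Set.mem_ofPred_eq] at hp ⊢
        obtain ⟨⟨⟨-, hK, hperm⟩, -, hKA⟩, rfl⟩ := hp
        exact ⟨hK, hKA, hperm⟩
      · simp only [coe_filter, Set.mem_ofPred_eq] at hp hq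
        exact Prod.ext (hp.2.trans hq.2.symm) h
  calc #P ≤ #(C ×ˢ L ∪ L ×ˢ C ∪ P') := card_le_card hcover
    _ ≤ #C * #L + #L * #C + d * #C := by
      grw [card_union_le, card_union_le, card_product, card_product, hP', filter_subset]
    _ = #C * (2 * #L + d) := by ring

theorem csd_nonneg (G : Type*) [Group G] : 0 ≤ csd G := by
  unfold csd
  positivity

theorem csd_le_of_card_permuting_le {G : Type*} [Group G] [Finite G] (A : Subgroup G) (d : ℕ)
    (hd : ∀ H : Subgroup G, IsCyclic H → ¬ H ≤ A →
      Nat.card {K : Subgroup G // IsCyclic K ∧ ¬ K ≤ A ∧ (H : Set G) * K = K * H} ≤ d) :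
    csd G ≤ (2 * Nat.card {K : Subgroup G // K ≤ A} + d) /
      Nat.card {H : Subgroup G // IsCyclic H} := by
  have hN : (0 : ℚ) < Nat.card {H : Subgroup G // IsCyclic H} := by
    have : Nonempty {H : Subgroup G // IsCyclic H} := ⟨⟨⊥, inferInstance⟩⟩
    exact_mod_cast Nat.card_pos
  rw [csd, sq, ← div_div, div_le_div_iff_of_pos_right hN, div_le_iff₀' hN]
  exact_mod_cast card_permuting_cyclic_pairs_le A d hd

namespace QuaternionGroup
variable {n : ℕ}

theorem mem_zpowers_xa [NeZero n] {i : ZMod (2 * n)} {g : QuaternionGroup n}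
    (hg : g ∈ zpowers (xa i)) :
    g = a 0 ∨ g = a n ∨ g = xa i ∨ g = xa (i - (n : ZMod (2 * n))) := by
  rw [mem_zpowers_iff_mem_range_orderOf, orderOf_xa] at hg
  simp only [mem_image, mem_range] at hg
  obtain ⟨k, hk, rfl⟩ := hg
  interval_cases k <;> simp [pow_succ]

theorem exists_eq_zpowers_xa [NeZero n] {H : Subgroup (QuaternionGroup n)} (hH : IsCyclic H)
    (hA : ¬ H ≤ zpowers (a 1)) : ∃ i, H = zpowers (xa i) := by
  obtain ⟨g, rfl⟩ := H.isCyclic_iff_exists_zpowers_eq_top.mp hH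
  cases g with
  | a t =>
    refine absurd (zpowers_le_of_mem (mem_zpowers_iff.mpr ⟨t.val, ?_⟩)) hA
    rw [zpow_natCast, a_one_pow, ZMod.natCast_zmod_val]
  | xa t => exact ⟨t, rfl⟩

theorem four_nsmul_sub_eq_zero_of_permute [NeZero n] {i j : ZMod (2 * n)}
    (h : (zpowers (xa i) : Set (QuaternionGroup n)) * zpowers (xa j) =
      zpowers (xa j) * zpowers (xa i)) : 4 • (i - j) = 0 := by
  obtain ⟨p, hp, q, hq, hpq⟩ :
      xa j * xa i ∈ (zpowers (xa i) : Set (QuaternionGroup n)) * zpowers (xa j) :=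
    h ▸ Set.mul_mem_mul (mem_zpowers _) (mem_zpowers _)
  have h2n : 2 * (n : ZMod (2 * n)) = 0 := by exact_mod_cast ZMod.natCast_self (2 * n)
  rw [xa_mul_xa] at hpq
  rcases mem_zpowers_xa hp with rfl | rfl | rfl | rfl <;>
    rcases mem_zpowers_xa hq with rfl | rfl | rfl | rfl <;>
    simp only [a_mul_a, a_mul_xa, xa_mul_a, xa_mul_xa, a.injEq, reduceCtorEq] at hpq <;>
    grind

theorem card_permuting_zpowers_xa_le [NeZero n] (i : ZMod (2 * n)) :
    Nat.card {K : Subgroup (QuaternionGroup n) // IsCyclic K ∧ ¬ K ≤ zpowers (a 1) ∧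
      (zpowers (xa i) : Set (QuaternionGroup n)) * K = K * zpowers (xa i)} ≤ 4 := by
  have hsub : {K : Subgroup (QuaternionGroup n) | IsCyclic K ∧ ¬ K ≤ zpowers (a 1) ∧
      (zpowers (xa i) : Set (QuaternionGroup n)) * K = K * zpowers (xa i)} ⊆
      (fun e => zpowers (xa (i - e))) '' {e | 4 • e = 0} := by
    rintro K ⟨hK, hKA, hperm⟩
    obtain ⟨j, rfl⟩ := exists_eq_zpowers_xa hK hKA
    exact ⟨i - j, four_nsmul_sub_eq_zero_of_permute hperm, by simp⟩
  calc _ ≤ ((fun e => zpowers (xa (i - e))) '' {e | 4 • e = 0}).ncard :=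
        Set.ncard_le_ncard hsub (Set.toFinite _)
    _ ≤ {e : ZMod (2 * n) | 4 • e = 0}.ncard := Set.ncard_image_le (Set.toFinite _)
    _ ≤ 4 := by
      rw [Set.ncard_eq_toFinset_card', Set.toFinset_ofPred]
      exact IsAddCyclic.card_nsmul_eq_zero_le four_pos

theorem le_card_isCyclic [NeZero n] :
    n ≤ Nat.card {H : Subgroup (QuaternionGroup n) // IsCyclic H} := by
  classical
  have := Fintype.ofFinite (Subgroup (QuaternionGroup n))
  -- `zpowers (xa i)` contains no `xa j` other than `xa i` and `xa (i - n)`.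
  have hfibre : ∀ H ∈ (univ : Finset (ZMod (2 * n))).image (fun j => zpowers (xa j)),
      #{j ∈ univ | zpowers (xa j) = H} ≤ 2 := by
    simp only [mem_image, mem_univ, true_and]
    rintro _ ⟨i, rfl⟩
    refine (card_le_card fun j hj => ?_).trans (card_le_two (a := i) (b := i - n))
    simp only [mem_filter, mem_univ, true_and] at hj
    have h := mem_zpowers_xa (hj ▸ mem_zpowers (xa j))
    simp only [reduceCtorEq, xa.injEq, false_or] at h
    simpa only [mem_insert, mem_singleton] using h
  have himage : (univ.image fun j => zpowers (xa j)) ⊆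
      univ.filter fun H : Subgroup (QuaternionGroup n) => IsCyclic H := by
    simp only [subset_iff, mem_image, mem_univ, true_and, mem_filter, forall_exists_index]
    rintro _ i rfl
    infer_instance
  have := (card_le_mul_card_image univ 2 hfibre).trans
    (Nat.mul_le_mul_left 2 (card_le_card himage))
  rw [card_univ, ZMod.card] at this
  rw [Nat.card_eq_fintype_card, Fintype.card_subtype]
  omega

theorem csd_le [NeZero n] : csd (QuaternionGroup n) ≤ (2 * #(2 * n).divisors + 4) / n := by
  have hA : Nat.card {K // K ≤ zpowers (a 1 : QuaternionGroup n)} ≤ #(2 * n).divisors := by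
    simpa only [orderOf_a_one] using card_le_zpowers_le_card_divisors (a 1 : QuaternionGroup n)
  calc csd (QuaternionGroup n)
      ≤ (2 * Nat.card {K // K ≤ zpowers (a 1 : QuaternionGroup n)} + 4) /
          Nat.card {H : Subgroup (QuaternionGroup n) // IsCyclic H} :=
        csd_le_of_card_permuting_le _ 4 fun H hH hHA => by
          obtain ⟨i, rfl⟩ := exists_eq_zpowers_xa hH hHA
          exact card_permuting_zpowers_xa_le i
    _ ≤ (2 * #(2 * n).divisors + 4) / n := by
      have : 0 < n := NeZero.pos n
      gcongr
      exact_mod_cast le_card_isCyclic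

theorem csd_two_pow_le (k : ℕ) : csd (QuaternionGroup (2 ^ k)) ≤ (2 * k + 8) / 2 ^ k := by
  have hdiv : #(2 * 2 ^ k).divisors = k + 2 := by
    rw [← pow_succ', Nat.divisors_prime_pow Nat.prime_two, card_map, card_range]
  convert csd_le (n := 2 ^ k) using 2
  · rw [hdiv]; push_cast; ring
  · push_cast; rfl

end QuaternionGroup

theorem tendsto_two_mul_add_eight_div_two_pow :
    Tendsto (fun k : ℕ => (2 * k + 8 : ℝ) / 2 ^ k) atTop (𝓝 0) := by
  have h1 := tendsto_pow_const_div_const_pow_of_one_lt 1 one_lt_two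
  have h2 := tendsto_pow_atTop_nhds_zero_of_lt_one (r := (2⁻¹ : ℝ)) (by norm_num) (by norm_num)
  convert (h1.const_mul 2).add (h2.const_mul 8) using 2 with k
  · simp only [pow_one, inv_pow]
    ring
  · simp

theorem stmt_12 :
    Filter.Tendsto (fun n : ℕ => (csd (QuaternionGroup (2 ^ (n - 2))) : ℝ))
      Filter.atTop (nhds 0) := by
  rw [← tendsto_add_atTop_iff_nat 2]
  -- `k + 2 - 2` reduces to `k`, but cannot be rewritten inside the type argument of `csd`.
  change Tendsto (fun k : ℕ => (csd (QuaternionGroup (2 ^ k)) : ℝ)) atTop (𝓝 0)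
  refine squeeze_zero (fun k => ?_) (fun k => ?_) tendsto_two_mul_add_eight_div_two_pow
  · exact_mod_cast csd_nonneg _
  · exact (Rat.cast_le.mpr (QuaternionGroup.csd_two_pow_le k)).trans_eq (by push_cast; rfl)
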